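/- For λ ∈ C with λ ≠ ±1, the curve C_2 in the weighted projective space P(1,1,1,2), defined by y_2^3 = y_0^3 + y_1^3 and y_3^3 = y_0^6 + y_1^6 − 2λ y_0^3 y_1^3, is smooth; moreover for λ = 1 or λ = −1 it is singular. -/

import Mathlib

/-!
A point of an affine chart is smooth as soon as one of the three 2×2 minors of the Jacobian,
`18 u² v² (u³ - λ)`, `-9 u² t²` and `9 v² t²`, is nonzero. Since `u` and `v` cannot vanish
together on `v³ = 1 + u³`, only points with `t = 0` can be singular. There the second equation
reads `(u³ - λ)² = λ² - 1`: this excludes `u = 0`, while `u³ = λ` or `v = 0` (i.e. `u³ = -1`)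
force `λ² = 1`. Conversely, for `λ² = 1` the point `u = λ`, `t = 0` lies on the curve and makes
the second row of the Jacobian vanish.
-/

/-- Jacobian of the equations `v³ = 1 + u³`, `t³ = 1 + u⁶ - 2λu³` of the
affine chart `{y₀ ≠ 0}` (and, by symmetry, `{y₁ ≠ 0}`) of the curve
`C₂ ⊂ ℙ(1,1,1,2)` given by `y₂³ = y₀³ + y₁³`, `y₃³ = y₀⁶ + y₁⁶ - 2λ y₀³y₁³`.
Since no point of `C₂` has `y₀ = y₁ = 0`, these two charts cover `C₂`. -/
def jacC2 (lam u v t : ℂ) : Matrix (Fin 2) (Fin 3) ℂ :=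
  !![-3 * u ^ 2, 3 * v ^ 2, 0;
     -6 * u ^ 5 + 6 * lam * u ^ 2, 0, 3 * t ^ 2]

theorem Matrix.rank_eq_card_height_of_isUnit_det_submatrix {m n R : Type*} [Fintype m]
    [DecidableEq m] [Fintype n] [CommRing R] [StrongRankCondition R] {M : Matrix m n R}
    (f : m → n) (h : IsUnit (M.submatrix id f).det) : M.rank = Fintype.card m :=
  le_antisymm M.rank_le_card_height <|
    (rank_of_isUnit _ ((isUnit_iff_isUnit_det _).2 h)).symm.le.trans (M.rank_submatrix_le id f)

section Minors

variable (lam u v t : ℂ)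

theorem det_jacC2_submatrix_01 :
    ((jacC2 lam u v t).submatrix id ![0, 1]).det = 18 * u ^ 2 * v ^ 2 * (u ^ 3 - lam) := by
  rw [Matrix.det_fin_two]
  show -3 * u ^ 2 * 0 - 3 * v ^ 2 * (-6 * u ^ 5 + 6 * lam * u ^ 2) = _
  ring

theorem det_jacC2_submatrix_02 :
    ((jacC2 lam u v t).submatrix id ![0, 2]).det = -9 * u ^ 2 * t ^ 2 := by
  rw [Matrix.det_fin_two]
  show -3 * u ^ 2 * (3 * t ^ 2) - 0 * (-6 * u ^ 5 + 6 * lam * u ^ 2) = _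
  ring

theorem det_jacC2_submatrix_12 :
    ((jacC2 lam u v t).submatrix id ![1, 2]).det = 9 * v ^ 2 * t ^ 2 := by
  rw [Matrix.det_fin_two]
  show 3 * v ^ 2 * (3 * t ^ 2) - 0 * 0 = _
  ring

end Minors

variable {lam u v t : ℂ}

theorem rank_jacC2_of_ne_zero (ht : t ≠ 0) (huv : u ≠ 0 ∨ v ≠ 0) :
    (jacC2 lam u v t).rank = 2 := by
  rcases huv with hu | hv
  · refine Matrix.rank_eq_card_height_of_isUnit_det_submatrix ![0, 2] (Ne.isUnit ?_)
    rw [det_jacC2_submatrix_02]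
    simp [hu, ht]
  · refine Matrix.rank_eq_card_height_of_isUnit_det_submatrix ![1, 2] (Ne.isUnit ?_)
    rw [det_jacC2_submatrix_12]
    simp [hv, ht]

theorem rank_jacC2_of_cube_ne (hu : u ≠ 0) (hv : v ≠ 0) (hlam : u ^ 3 ≠ lam) :
    (jacC2 lam u v t).rank = 2 := by
  refine Matrix.rank_eq_card_height_of_isUnit_det_submatrix ![0, 1] (Ne.isUnit ?_)
  rw [det_jacC2_submatrix_01]
  simp [hu, hv, sub_ne_zero.2 hlam]

theorem rank_jacC2_lt_two_of_cube_eq (hu : u ^ 3 = lam) : (jacC2 lam u v 0).rank < 2 := by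
  have hjac : jacC2 lam u v 0 = !![-3 * u ^ 2, 3 * v ^ 2, 0; 0, 0, 0] := by
    rw [jacC2, ← hu]
    ring_nf
  refine ((jacC2 lam u v 0).rank_le_card_of_support_subset {0} ?_).trans_lt (by simp)
  refine Function.support_subset_iff'.2 fun i hi => ?_
  obtain rfl : i = 1 := by fin_cases i <;> simp_all
  rw [hjac]
  ext j
  fin_cases j <;> rfl

theorem rank_jacC2_eq_two (hlam : lam ^ 2 ≠ 1) (hv : v ^ 3 = 1 + u ^ 3)
    (ht : t ^ 3 = 1 + u ^ 6 - 2 * lam * u ^ 3) : (jacC2 lam u v t).rank = 2 := by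
  by_cases ht0 : t = 0
  · subst ht0
    have hdisc : (u ^ 3 - lam) ^ 2 = lam ^ 2 - 1 := by linear_combination -ht
    apply rank_jacC2_of_cube_ne
    · rintro rfl
      norm_num at ht
    · rintro rfl
      have hu : u ^ 3 = -1 := by linear_combination -hv
      rw [hu] at hdisc
      exact hlam (by linear_combination (lam - 1) / 2 * hdisc)
    · intro hu
      rw [hu, sub_self] at hdisc
      exact hlam (by linear_combination -hdisc)
  · refine rank_jacC2_of_ne_zero ht0 (not_and_or.1 ?_)
    rintro ⟨rfl, rfl⟩
    norm_num at hv

theorem exists_singular_point_jacC2 (hlam : lam ^ 2 = 1) :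
    ∃ u v t : ℂ, v ^ 3 = 1 + u ^ 3 ∧ t ^ 3 = 1 + u ^ 6 - 2 * lam * u ^ 3 ∧
      (jacC2 lam u v t).rank < 2 := by
  obtain ⟨v, hv⟩ := IsAlgClosed.exists_pow_nat_eq (1 + lam ^ 3) three_pos
  exact ⟨lam, v, 0, hv, by linear_combination (1 + lam ^ 2 - lam ^ 4) * hlam,
    rank_jacC2_lt_two_of_cube_eq (by linear_combination lam * hlam)⟩

/-- For `λ ≠ ±1` the curve `C₂ : y₂³ = y₀³ + y₁³, y₃³ = y₀⁶ + y₁⁶ - 2λ y₀³y₁³`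
in `ℙ(1,1,1,2)` is smooth (the Jacobian has rank 2 at every point of every
affine chart), while for `λ = ±1` it is singular. -/
theorem C2_smooth_iff (lam : ℂ) :
    ((lam ≠ 1 ∧ lam ≠ -1) →
      ∀ u v t : ℂ, v ^ 3 = 1 + u ^ 3 → t ^ 3 = 1 + u ^ 6 - 2 * lam * u ^ 3 →
        (jacC2 lam u v t).rank = 2) ∧
    ((lam = 1 ∨ lam = -1) →
      ∃ u v t : ℂ, v ^ 3 = 1 + u ^ 3 ∧ t ^ 3 = 1 + u ^ 6 - 2 * lam * u ^ 3 ∧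
        (jacC2 lam u v t).rank < 2) := by
  refine ⟨fun hlam _ _ _ => rank_jacC2_eq_two ?_, fun hlam => exists_singular_point_jacC2 ?_⟩
  · rwa [Ne, sq_eq_one_iff, not_or]
  · exact sq_eq_one_iff.2 hlam
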